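/- arXiv:2309.05172 — 4 statements merged into one kernel-verified Lean document; each statement's English description precedes it below -/
import Mathlib

section
/- Let H be a finite forest whose vertex set is partitioned into active vertices V_a and inactive vertices V_i, where every inactive vertex has degree at least 2. Then the sum of the degrees of the active vertices is at most 2|V_a|. -/
/-!
The degrees sum to `2|E| ≤ 2(|V| - 1)` because a forest extends to a spanning tree of the
complete graph, and the inactive vertices already account for at least `2|V_i|` of that sum.
-/

open Finset SimpleGraph

lemma SimpleGraph.IsAcyclic.card_edgeFinset_add_one_le {V : Type*} [Fintype V] [Nonempty V]
    {G : SimpleGraph V} [Fintype G.edgeSet] (hG : G.IsAcyclic) :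
    #G.edgeFinset + 1 ≤ Fintype.card V := by
  classical
  obtain ⟨T, hGT, -, hT⟩ := connected_top.exists_isTree_le_of_le_of_isAcyclic le_top hG
  rw [← hT.card_edgeFinset]
  exact Nat.succ_le_succ (card_le_card (edgeFinset_mono hGT))

theorem stmt2 {V : Type*} [Fintype V] (H : SimpleGraph V)
    [DecidableRel H.Adj] (hH : H.IsAcyclic)
    (Va Vi : Finset V) (hpart : ∀ v, v ∈ Va ↔ v ∉ Vi)
    (hdeg : ∀ v ∈ Vi, 2 ≤ H.degree v) :
    ∑ v ∈ Va, H.degree v ≤ 2 * Va.card := by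
  classical
  obtain hV | hV := isEmpty_or_nonempty V
  · simp [Finset.eq_empty_of_isEmpty Va]
  have hVa : Va = Viᶜ := by ext v; simp [hpart v]
  have handshake : ∑ v ∈ Va, H.degree v + ∑ v ∈ Vi, H.degree v = 2 * #H.edgeFinset := by
    rw [← H.sum_degrees_eq_twice_card_edges, hVa, sum_compl_add_sum]
  have hVi : 2 * #Vi ≤ ∑ v ∈ Vi, H.degree v := by
    simpa [mul_comm] using sum_le_sum hdeg
  have hcard : #Va + #Vi = Fintype.card V := by
    rw [hVa, card_compl, Nat.sub_add_cancel (card_le_univ Vi)]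
  have hforest := hH.card_edgeFinset_add_one_le
  omega
end

section
/- Let A and B be finite sets, R ⊆ A × B a relation, y : A → ℝ≥0 and π : B → ℝ≥0. There exists a function f : A × B → ℝ≥0 with f(a,b) = 0 whenever (a,b) ∉ R, ∑_{b} f(a,b) = y(a) for every a ∈ A, and ∑_{a} f(a,b) ≤ π(b) for every b ∈ B, if and only if for every subset T ⊆ A, ∑_{a ∈ T} y(a) ≤ ∑_{b ∈ N(T)} π(b), where N(T) = {b ∈ B : ∃ a ∈ T, (a,b) ∈ R}. -/
open Finset
open scoped Classical
set_option linter.unusedSectionVars false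

section Aux
variable {A B : Type*} [Fintype A] [Fintype B]

/-- Feasibility of a subflow. -/
def Feas (R : A → B → Prop) (y : A → ℝ) (π : B → ℝ) (g : A → B → ℝ) : Prop :=
  (∀ a b, 0 ≤ g a b) ∧ (∀ a b, ¬ R a b → g a b = 0) ∧
  (∀ a, ∑ b, g a b ≤ y a) ∧ (∀ b, ∑ a, g a b ≤ π b)

def Phi (g : A → B → ℝ) : ℝ := ∑ a, ∑ b, g a b

def Reach (R : A → B → Prop) (y : A → ℝ) (g : A → B → ℝ) : ℕ → A → Prop
  | 0, a => ∑ b, g a b < y a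
  | (n+1), a => (∑ b, g a b < y a) ∨ ∃ a' b', Reach R y g n a' ∧ R a' b' ∧ 0 < g a b'

variable {R : A → B → Prop} {y : A → ℝ} {π : B → ℝ}

lemma reach_succ {g : A → B → ℝ} : ∀ {n a}, Reach R y g n a → Reach R y g (n+1) a := by
  intro n
  induction n with
  | zero => intro a h; exact Or.inl h
  | succ n ih =>
    intro a h
    rcases h with h | ⟨a', b', h1, h2, h3⟩
    · exact Or.inl h
    · exact Or.inr ⟨a', b', ih h1, h2, h3⟩

lemma reach_mono {g : A → B → ℝ} {m n : ℕ} (h : m ≤ n) {a : A}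
    (hr : Reach R y g m a) : Reach R y g n a := by
  induction h with
  | refl => exact hr
  | step _ ih => exact reach_succ ih

/-- indicator flow -/
noncomputable def ind (a : A) (b : B) (ε : ℝ) : A → B → ℝ := fun x c => if x = a then (if c = b then ε else 0) else 0

lemma ind_row (a : A) (b : B) (ε : ℝ) (x : A) :
    ∑ c, ind a b ε x c = if x = a then ε else 0 := by
  by_cases hx : x = a <;> simp [ind, hx]

lemma ind_col (a : A) (b : B) (ε : ℝ) (c : B) :
    ∑ x, ind a b ε x c = if c = b then ε else 0 := by
  by_cases hc : c = b <;> simp [ind, hc]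

lemma ind_nonneg (a : A) (b : B) {ε : ℝ} (hε : 0 ≤ ε) (x : A) (c : B) :
    0 ≤ ind a b ε x c := by
  unfold ind; split <;> [skip; exact le_refl 0]
  split <;> [exact hε; exact le_refl 0]

lemma ind_apply_ne (a : A) (b : B) (ε : ℝ) {x : A} {c : B} (h : ¬ (x = a ∧ c = b)) :
    ind a b ε x c = 0 := by
  unfold ind
  by_cases hx : x = a <;> by_cases hc : c = b <;> simp [hx, hc] at h ⊢

lemma Phi_add (g h : A → B → ℝ) : Phi (fun x c => g x c + h x c) = Phi g + Phi h := by
  unfold Phi; rw [← Finset.sum_add_distrib]; congr 1; funext a; rw [← Finset.sum_add_distrib]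

lemma Phi_ind (a : A) (b : B) (ε : ℝ) : Phi (ind a b ε) = ε := by
  unfold Phi
  rw [Finset.sum_congr rfl (fun x _ => ind_row a b ε x)]
  simp


lemma aug0 {g : A → B → ℝ} (hg : Feas R y π g) {a : A} {b : B}
    (ha : ∑ c, g a c < y a) (hR : R a b) (hb : ∑ x, g x b < π b) :
    ∃ g', Feas R y π g' ∧ Phi g < Phi g' := by
  set ε : ℝ := min (y a - ∑ c, g a c) (π b - ∑ x, g x b) with hεdef
  have hε : 0 < ε := lt_min (by linarith) (by linarith)
  refine ⟨fun x c => g x c + ind a b ε x c, ⟨?_, ?_, ?_, ?_⟩, ?_⟩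
  · intro x c
    show 0 ≤ g x c + ind a b ε x c
    have := ind_nonneg a b hε.le x c
    have := hg.1 x c
    linarith
  · intro x c hxc
    have h1 : g x c = 0 := hg.2.1 x c hxc
    have h2 : ind a b ε x c = 0 := by
      apply ind_apply_ne
      rintro ⟨rfl, rfl⟩
      exact hxc hR
    show g x c + ind a b ε x c = 0
    rw [h1, h2, add_zero]
  · intro x
    rw [Finset.sum_add_distrib, ind_row]
    by_cases hx : x = a
    · subst hx
      rw [if_pos rfl]
      have : ε ≤ y x - ∑ c, g x c := min_le_left _ _
      linarith
    · simp only [if_neg hx, add_zero]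
      exact hg.2.2.1 x
  · intro c
    rw [Finset.sum_add_distrib, ind_col]
    by_cases hc : c = b
    · subst hc
      rw [if_pos rfl]
      have : ε ≤ π c - ∑ x, g x c := min_le_right _ _
      linarith
    · simp only [if_neg hc, add_zero]
      exact hg.2.2.2 c
  · rw [Phi_add, Phi_ind]
    linarith


lemma Phi_sub (g h : A → B → ℝ) : Phi (fun x c => g x c - h x c) = Phi g - Phi h := by
  unfold Phi; rw [← Finset.sum_sub_distrib]; congr 1; funext a; rw [← Finset.sum_sub_distrib]

lemma reach_shift {g g₁ : A → B → ℝ} {a : A} {b' : B}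
    (hrow : ∀ x, ∑ c, g₁ x c = ∑ c, g x c)
    (hmono : ∀ x c, ¬ (x = a ∧ c = b') → g x c ≤ g₁ x c) :
    ∀ n, ∀ c, Reach R y g n c →
      Reach R y g₁ n c ∨ ∃ m, m < n ∧ ∃ x, Reach R y g₁ m x ∧ R x b' := by
  intro n
  induction n with
  | zero =>
    intro c h
    left
    show ∑ d, g₁ c d < y c
    rw [hrow]; exact h
  | succ n ih =>
    intro c h
    rcases h with h | ⟨a'', b'', h1, h2, h3⟩
    · left; exact Or.inl (by rw [show (∑ d, g₁ c d) = ∑ d, g c d from hrow c]; exact h)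
    · rcases ih a'' h1 with h4 | ⟨m, hm, x, hx, hxb⟩
      · by_cases hc : c = a ∧ b'' = b'
        · right
          exact ⟨n, Nat.lt_succ_self n, a'', h4, hc.2 ▸ h2⟩
        · left
          exact Or.inr ⟨a'', b'', h4, h2, lt_of_lt_of_le h3 (hmono c b'' hc)⟩
      · right
        exact ⟨m, hm.trans (Nat.lt_succ_self n), x, hx, hxb⟩

lemma aug : ∀ n : ℕ, ∀ g : A → B → ℝ, Feas R y π g → ∀ a b, Reach R y g n a → R a b →
    (∑ x, g x b < π b) → ∃ g', Feas R y π g' ∧ Phi g < Phi g' := by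
  intro n
  induction n with
  | zero =>
    intro g hg a b hr hR hb
    exact aug0 hg hr hR hb
  | succ n ih =>
    intro g hg a b hr hR hb
    rcases hr with ha | ⟨a', b', hr', hR', hpos⟩
    · exact aug0 hg ha hR hb
    by_cases hsat : ∑ x, g x b' < π b'
    · exact ih g hg a' b' hr' hR' hsat
    have hsat' : ∑ x, g x b' = π b' := le_antisymm (hg.2.2.2 b') (not_lt.1 hsat)
    have hbb' : b ≠ b' := by
      rintro rfl
      exact (ne_of_lt hb) hsat'
    set ε : ℝ := min (g a b') (π b - ∑ x, g x b) with hεdef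
    have hε : 0 < ε := lt_min hpos (by linarith)
    have hεb' : ε ≤ g a b' := min_le_left _ _
    have hεb : ε ≤ π b - ∑ x, g x b := min_le_right _ _
    set g₁ : A → B → ℝ := fun x c => g x c + ind a b ε x c - ind a b' ε x c with hg₁def
    have hRab' : R a b' := by
      by_contra hcon
      exact absurd (hg.2.1 a b' hcon) (ne_of_gt hpos)
    -- pointwise description
    have happly : ∀ x c, g₁ x c = g x c + ind a b ε x c - ind a b' ε x c := fun x c => rfl
    have hrow : ∀ x, ∑ c, g₁ x c = ∑ c, g x c := by
      intro x
      simp only [happly]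
      rw [Finset.sum_sub_distrib, Finset.sum_add_distrib, ind_row, ind_row]
      ring
    have hcol : ∀ c, ∑ x, g₁ x c =
        ∑ x, g x c + (if c = b then ε else 0) - (if c = b' then ε else 0) := by
      intro c
      simp only [happly]
      rw [Finset.sum_sub_distrib, Finset.sum_add_distrib, ind_col, ind_col]
    have hmono : ∀ x c, ¬ (x = a ∧ c = b') → g x c ≤ g₁ x c := by
      intro x c h
      rw [happly, ind_apply_ne a b' ε h]
      have := ind_nonneg a b hε.le x c
      linarith
    have hfeas : Feas R y π g₁ := by
      refine ⟨?_, ?_, ?_, ?_⟩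
      · intro x c
        by_cases h : x = a ∧ c = b'
        · rw [happly, h.1, h.2,
            ind_apply_ne a b ε (by rintro ⟨-, h2⟩; exact hbb' h2.symm)]
          simp [ind]
          linarith
        · exact le_trans (hg.1 x c) (hmono x c h)
      · intro x c hxc
        rw [happly, hg.2.1 x c hxc,
          ind_apply_ne a b ε (by rintro ⟨rfl, rfl⟩; exact hxc hR),
          ind_apply_ne a b' ε (by rintro ⟨rfl, rfl⟩; exact hxc hRab')]
        ring
      · intro x
        rw [hrow]; exact hg.2.2.1 x
      · intro c
        rw [hcol]
        by_cases hc : c = b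
        · subst hc
          rw [if_pos rfl, if_neg (fun h => hbb' h)]
          linarith
        · rw [if_neg hc]
          have h2 : (if c = b' then ε else 0) ≥ 0 := by positivity
          have := hg.2.2.2 c
          linarith
    have hPhi : Phi g₁ = Phi g := by
      have : Phi g₁ = Phi (fun x c => g x c + ind a b ε x c) - Phi (ind a b' ε) := by
        rw [← Phi_sub]
      rw [this, Phi_add, Phi_ind, Phi_ind]
      ring
    have hb'₁ : ∑ x, g₁ x b' < π b' := by
      rw [hcol, if_neg (fun h => hbb' h.symm), if_pos rfl, hsat']
      linarith
    rcases reach_shift hrow hmono n a' hr' with h4 | ⟨m, hm, x, hx, hxb⟩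
    · obtain ⟨g', hg', hlt⟩ := ih g₁ hfeas a' b' h4 hR' hb'₁
      exact ⟨g', hg', by linarith [hPhi ▸ hlt]⟩
    · obtain ⟨g', hg', hlt⟩ := ih g₁ hfeas x b' (reach_mono (Nat.le_of_lt_succ (hm.trans (Nat.lt_succ_self n))) hx) hxb hb'₁
      exact ⟨g', hg', by linarith [hPhi ▸ hlt]⟩


lemma continuous_eval (a : A) (b : B) : Continuous (fun g : A → B → ℝ => g a b) :=
  (continuous_apply b).comp (continuous_apply a)

lemma continuous_row (a : A) : Continuous (fun g : A → B → ℝ => ∑ b, g a b) :=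
  continuous_finset_sum _ (fun b _ => continuous_eval a b)

lemma continuous_col (b : B) : Continuous (fun g : A → B → ℝ => ∑ a, g a b) :=
  continuous_finset_sum _ (fun a _ => continuous_eval a b)

lemma continuous_Phi : Continuous (Phi : (A → B → ℝ) → ℝ) :=
  continuous_finset_sum _ (fun a _ => continuous_row a)

lemma isClosed_Feas (R : A → B → Prop) (y : A → ℝ) (π : B → ℝ) :
    IsClosed {g : A → B → ℝ | Feas R y π g} := by
  have h : {g : A → B → ℝ | Feas R y π g} =
      (⋂ a, ⋂ b, {g : A → B → ℝ | 0 ≤ g a b}) ∩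
      ((⋂ a, ⋂ b, {g : A → B → ℝ | ¬ R a b → g a b = 0}) ∩
      ((⋂ a, {g : A → B → ℝ | ∑ b, g a b ≤ y a}) ∩
       (⋂ b, {g : A → B → ℝ | ∑ a, g a b ≤ π b}))) := by
    ext g
    simp only [Set.mem_setOf_eq, Set.mem_inter_iff, Set.mem_iInter, Feas]
  rw [h]
  refine IsClosed.inter ?_ (IsClosed.inter ?_ (IsClosed.inter ?_ ?_))
  · exact isClosed_iInter fun a => isClosed_iInter fun b =>
      isClosed_le continuous_const (continuous_eval a b)
  · refine isClosed_iInter fun a => isClosed_iInter fun b => ?_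
    by_cases hR : R a b
    · have : {g : A → B → ℝ | ¬ R a b → g a b = 0} = Set.univ := by
        ext g; simp [hR]
      rw [this]; exact isClosed_univ
    · have : {g : A → B → ℝ | ¬ R a b → g a b = 0} = {g | g a b = 0} := by
        ext g; simp [hR]
      rw [this]
      exact isClosed_eq (continuous_eval a b) continuous_const
  · exact isClosed_iInter fun a => isClosed_le (continuous_row a) continuous_const
  · exact isClosed_iInter fun b => isClosed_le (continuous_col b) continuous_const

lemma exists_max (R : A → B → Prop) (y : A → ℝ) (π : B → ℝ)
    (hy : ∀ a, 0 ≤ y a) (hπ : ∀ b, 0 ≤ π b) :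
    ∃ f, Feas R y π f ∧ ∀ g, Feas R y π g → Phi g ≤ Phi f := by
  have h0 : Feas R y π (fun _ _ => (0:ℝ)) := by
    refine ⟨fun _ _ => le_refl 0, fun _ _ _ => rfl, ?_, ?_⟩
    · intro a; simpa using hy a
    · intro b; simpa using hπ b
  set K : Set (A → B → ℝ) := Set.univ.pi (fun a => Set.univ.pi (fun _ : B => Set.Icc 0 (y a)))
    with hKdef
  have hK : IsCompact K :=
    isCompact_univ_pi fun a => isCompact_univ_pi fun _ => isCompact_Icc
  have hsub : {g : A → B → ℝ | Feas R y π g} ⊆ K := by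
    intro g hg
    intro a _
    intro b _
    refine ⟨hg.1 a b, ?_⟩
    calc g a b ≤ ∑ c, g a c :=
          Finset.single_le_sum (fun c _ => hg.1 a c) (Finset.mem_univ b)
      _ ≤ y a := hg.2.2.1 a
  have hcpt : IsCompact {g : A → B → ℝ | Feas R y π g} :=
    hK.of_isClosed_subset (isClosed_Feas R y π) hsub
  obtain ⟨f, hf, hmax⟩ := hcpt.exists_isMaxOn ⟨_, h0⟩ continuous_Phi.continuousOn
  exact ⟨f, hf, fun g hg => hmax hg⟩

end Aux

open scoped Classical in
theorem stmt6 {A B : Type*} [Fintype A] [Fintype B]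
    (R : A → B → Prop) (y : A → ℝ) (π : B → ℝ)
    (hy : ∀ a, 0 ≤ y a) (hπ : ∀ b, 0 ≤ π b) :
    (∃ f : A → B → ℝ, (∀ a b, 0 ≤ f a b) ∧ (∀ a b, ¬ R a b → f a b = 0) ∧
      (∀ a, ∑ b, f a b = y a) ∧ (∀ b, ∑ a, f a b ≤ π b)) ↔
    (∀ T : Finset A, ∑ a ∈ T, y a ≤
      ∑ b ∈ Finset.univ.filter (fun b => ∃ a ∈ T, R a b), π b) := by
  constructor
  · rintro ⟨f, h0, hsupp, hrow, hcol⟩ T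
    set NT : Finset B := Finset.univ.filter (fun b => ∃ a ∈ T, R a b) with hNT
    have h1 : ∀ a ∈ T, y a = ∑ b ∈ NT, f a b := by
      intro a ha
      rw [← hrow a]
      refine (Finset.sum_subset (Finset.subset_univ NT) ?_).symm
      intro b _ hb
      refine hsupp a b ?_
      intro hab
      exact hb (Finset.mem_filter.2 ⟨Finset.mem_univ b, a, ha, hab⟩)
    calc ∑ a ∈ T, y a = ∑ a ∈ T, ∑ b ∈ NT, f a b := Finset.sum_congr rfl h1
      _ = ∑ b ∈ NT, ∑ a ∈ T, f a b := Finset.sum_comm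
      _ ≤ ∑ b ∈ NT, ∑ a, f a b := Finset.sum_le_sum fun b _ =>
          Finset.sum_le_sum_of_subset_of_nonneg (Finset.subset_univ T)
            (fun x _ _ => h0 x b)
      _ ≤ ∑ b ∈ NT, π b := Finset.sum_le_sum fun b _ => hcol b
  · intro hHall
    obtain ⟨f, hf, hmax⟩ := exists_max R y π hy hπ
    refine ⟨f, hf.1, hf.2.1, ?_, hf.2.2.2⟩
    by_contra hcon
    push_neg at hcon
    obtain ⟨a₀, ha₀⟩ := hcon
    have hdef : ∑ b, f a₀ b < y a₀ := lt_of_le_of_ne (hf.2.2.1 a₀) ha₀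
    set S : Finset A := Finset.univ.filter (fun a => ∃ n, Reach R y f n a) with hS
    set NS : Finset B := Finset.univ.filter (fun b => ∃ a ∈ S, R a b) with hNS
    have ha₀S : a₀ ∈ S := Finset.mem_filter.2 ⟨Finset.mem_univ _, 0, hdef⟩
    have hiS : ∀ b ∈ NS, ∑ x, f x b = π b := by
      intro b hb
      obtain ⟨-, a, haS, hab⟩ := Finset.mem_filter.1 hb
      obtain ⟨-, n, hr⟩ := Finset.mem_filter.1 haS
      refine le_antisymm (hf.2.2.2 b) (not_lt.1 ?_)
      intro hlt
      obtain ⟨g', hg', hlt'⟩ := aug n f hf a b hr hab hlt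
      exact absurd (hmax g' hg') (not_le.2 hlt')
    have hii : ∀ b ∈ NS, ∀ x, 0 < f x b → x ∈ S := by
      intro b hb x hx
      obtain ⟨-, a, haS, hab⟩ := Finset.mem_filter.1 hb
      obtain ⟨-, n, hr⟩ := Finset.mem_filter.1 haS
      exact Finset.mem_filter.2 ⟨Finset.mem_univ _, n + 1, Or.inr ⟨a, b, hr, hab, hx⟩⟩
    have key : ∑ b ∈ NS, π b < ∑ a ∈ S, y a := by
      calc ∑ b ∈ NS, π b = ∑ b ∈ NS, ∑ x, f x b :=
            Finset.sum_congr rfl fun b hb => (hiS b hb).symm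
        _ = ∑ x, ∑ b ∈ NS, f x b := Finset.sum_comm
        _ = ∑ x ∈ S, ∑ b ∈ NS, f x b := by
            refine (Finset.sum_subset (Finset.subset_univ S) ?_).symm
            intro x _ hxS
            refine Finset.sum_eq_zero fun b hb => ?_
            by_contra hne
            exact hxS (hii b hb x (lt_of_le_of_ne (hf.1 x b) (Ne.symm hne)))
        _ ≤ ∑ x ∈ S, ∑ b, f x b := Finset.sum_le_sum fun x _ =>
            Finset.sum_le_sum_of_subset_of_nonneg (Finset.subset_univ NS)
              (fun b _ _ => hf.1 x b)
        _ < ∑ x ∈ S, y x :=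
            Finset.sum_lt_sum (fun x _ => hf.2.2.1 x) ⟨a₀, ha₀S, hdef⟩
    exact absurd (hHall S) (not_le.2 key)
end

section
/- Let X ≥ 0, n ≥ 2, and real numbers cp₁, cp₂, pp ≥ 0 with X ≥ 2·cp₂ + cp₁ + pp. Suppose cost₁ ≤ (2 − 2/n)·X + cp₁ − (1 − 2/n)·cp₂ + pp and cost₂ ≤ (2 − 1/n)·X − (1 − 1/n)·cp₁ + cp₂ − (1 − 1/n)·pp. Then min(cost₁, cost₂) ≤ (2 − 1/n)·X. -/
theorem stmt12 (X cp1 cp2 pp cost1 cost2 : ℝ) (n : ℕ) (hn : 2 ≤ n)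
    (hX : 0 ≤ X) (h1 : 0 ≤ cp1) (h2 : 0 ≤ cp2) (h3 : 0 ≤ pp)
    (hXb : 2 * cp2 + cp1 + pp ≤ X)
    (hc1 : cost1 ≤ (2 - 2 / (n : ℝ)) * X + cp1 - (1 - 2 / (n : ℝ)) * cp2 + pp)
    (hc2 : cost2 ≤ (2 - 1 / (n : ℝ)) * X - (1 - 1 / (n : ℝ)) * cp1 + cp2
      - (1 - 1 / (n : ℝ)) * pp) :
    min cost1 cost2 ≤ (2 - 1 / (n : ℝ)) * X := by
  have hn' : (2 : ℝ) ≤ (n : ℝ) := by exact_mod_cast hn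
  have hpos : (0 : ℝ) < (n : ℝ) := by linarith
  have h2n : (2 : ℝ) / (n : ℝ) = 2 * (1 / (n : ℝ)) := by ring
  rw [h2n] at hc1
  have hinvpos : 0 < 1 / (n : ℝ) := by positivity
  set t := 1 / (n : ℝ) with ht
  have hmul : t * (2 * cp2 + cp1 + pp) ≤ t * X :=
    mul_le_mul_of_nonneg_left hXb hinvpos.le
  have key : cost1 + cost2 ≤ 2 * ((2 - t) * X) := by nlinarith [hmul, hc1, hc2]
  have : min cost1 cost2 ≤ (cost1 + cost2) / 2 := by
    rcases le_total cost1 cost2 with h | h <;> simp [min_def, h] <;> linarith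
  linarith
end

section
/- Let F be a finite forest on vertex set V and let S₁, …, S_m ⊆ V be sets such that each S_t cuts exactly one edge e_t of F (the e_t need not be distinct). Let D be a collection of vertex pairs connected in F such that no S_t cuts any pair of D. Then every pair of D remains connected in the forest F with all edges e₁, …, e_m removed. -/
/-- A set `S` of vertices cuts an edge `e` if exactly one endpoint of `e` lies in `S`. -/
def cutsEdge {V : Type*} (S : Set V) (e : Sym2 V) : Prop :=
  ∃ u v, e = s(u, v) ∧ u ∈ S ∧ v ∉ S

/-- A set `S` cuts a pair `(i, j)` if exactly one of `i`, `j` lies in `S`. -/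
def cutsPair {V : Type*} (S : Set V) (p : V × V) : Prop :=
  (p.1 ∈ S ∧ p.2 ∉ S) ∨ (p.2 ∈ S ∧ p.1 ∉ S)

lemma cutsEdge_mk {V : Type*} (S : Set V) (a b : V) :
    cutsEdge S s(a, b) ↔ ((a ∈ S ∧ b ∉ S) ∨ (b ∈ S ∧ a ∉ S)) := by
  constructor
  · rintro ⟨u, v, h, hu, hv⟩
    rw [Sym2.eq_iff] at h
    rcases h with ⟨rfl, rfl⟩ | ⟨rfl, rfl⟩
    · exact Or.inl ⟨hu, hv⟩
    · exact Or.inr ⟨hu, hv⟩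
  · rintro (⟨ha, hb⟩ | ⟨hb, ha⟩)
    · exact ⟨a, b, rfl, ha, hb⟩
    · exact ⟨b, a, Sym2.eq_swap, hb, ha⟩

lemma no_cut_iff {V : Type*} {F : SimpleGraph V} (S : Set V) {a b : V} (w : F.Walk a b)
    (h : ∀ e' ∈ w.edges, ¬ cutsEdge S e') : (a ∈ S ↔ b ∈ S) := by
  induction w with
  | nil => rfl
  | cons hadj w ih =>
    rename_i u v c
    have h1 : ¬ cutsEdge S s(u, v) := h _ (by simp)
    have h2 := ih (fun e' he' => h e' (by simp [he']))
    rw [cutsEdge_mk] at h1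
    push_neg at h1
    constructor
    · intro hu
      exact h2.mp (h1.1 hu)
    · intro hc
      exact h1.2 (h2.mpr hc)

lemma path_no_cut {V : Type*} {F : SimpleGraph V} (S : Set V) (e0 : Sym2 V) {a b : V}
    (w : F.Walk a b) (hnd : w.edges.Nodup) (hab : a ∈ S ↔ b ∈ S)
    (huniq : ∀ e' ∈ w.edges, cutsEdge S e' → e' = e0) :
    ∀ e' ∈ w.edges, ¬ cutsEdge S e' := by
  induction w with
  | nil => intro e' he'; simp at he'
  | cons hadj w ih =>
    rename_i u v c
    by_cases hc : cutsEdge S s(u, v)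
    · exfalso
      have heq : s(u, v) = e0 := huniq _ (by simp) hc
      -- u and v differ w.r.t. S, so v and c differ
      rw [cutsEdge_mk] at hc
      have hvc : ¬ (v ∈ S ↔ c ∈ S) := by
        rcases hc with ⟨hu, hv⟩ | ⟨hv, hu⟩
        · intro hiff; exact hv (hiff.mpr (hab.mp hu))
        · intro hiff; exact hu (hab.mpr (hiff.mp hv))
      -- hence some edge of w is cut, and it must equal e0 = s(u,v), contradicting nodup
      have : ¬ ∀ e' ∈ w.edges, ¬ cutsEdge S e' := fun h => hvc (no_cut_iff S w h)
      push_neg at this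
      obtain ⟨e', he', hce'⟩ := this
      have he0 : e' = e0 := huniq _ (by simp [he']) hce'
      rw [SimpleGraph.Walk.edges_cons, List.nodup_cons] at hnd
      exact hnd.1 (heq ▸ he0 ▸ he')
    · rw [SimpleGraph.Walk.edges_cons, List.nodup_cons] at hnd
      have h2 : v ∈ S ↔ c ∈ S := by
        rw [cutsEdge_mk] at hc
        push_neg at hc
        constructor
        · intro hv; exact hab.mp (hc.2 hv)
        · intro hcc; exact hc.1 (hab.mpr hcc)
      have ihw := ih hnd.2 h2 (fun e' he' => huniq e' (by simp [he']))
      intro e' he'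
      rcases List.mem_cons.mp he' with rfl | hmem
      · exact hc
      · exact ihw e' hmem

theorem stmt14 {V : Type*} (F : SimpleGraph V) (hF : F.IsAcyclic)
    (m : ℕ) (S : Fin m → Set V) (e : Fin m → Sym2 V)
    (he : ∀ t, e t ∈ F.edgeSet)
    (hcut : ∀ t, cutsEdge (S t) (e t))
    (huniq : ∀ t, ∀ e' ∈ F.edgeSet, cutsEdge (S t) e' → e' = e t)
    (D : Set (V × V))
    (hconn : ∀ p ∈ D, F.Reachable p.1 p.2)
    (hnocut : ∀ t, ∀ p ∈ D, ¬ cutsPair (S t) p) :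
    ∀ p ∈ D, (F.deleteEdges (Set.range e)).Reachable p.1 p.2 := by
  intro p hp
  obtain ⟨w⟩ := hconn p hp
  classical
  let P := w.toPath
  have hP : (P : F.Walk p.1 p.2).edges.Nodup := P.2.edges_nodup
  have hside : ∀ t, (p.1 ∈ S t ↔ p.2 ∈ S t) := by
    intro t
    have := hnocut t p hp
    unfold cutsPair at this
    push_neg at this
    exact ⟨this.1, this.2⟩
  have hnotin : ∀ e' ∈ (P : F.Walk p.1 p.2).edges, e' ∉ Set.range e := by
    intro e' he' hr
    obtain ⟨t, ht⟩ := hr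
    subst ht
    have hnc := path_no_cut (S t) (e t) (P : F.Walk p.1 p.2) hP (hside t)
      (fun e'' he'' hc => huniq t e'' ((P : F.Walk p.1 p.2).edges_subset_edgeSet he'') hc)
    exact hnc _ he' (hcut t)
  exact ⟨(P : F.Walk p.1 p.2).toDeleteEdges (Set.range e) hnotin⟩
end
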